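/- arXiv:0909.4846 — 3 statements merged into one kernel-verified Lean document; each statement's English description precedes it below -/
import Mathlib

section
/- For every natural number n, the integral over (0,∞) of x^n · 2·K₀(2√x) dx equals (n!)², where K₀ is the modified Bessel function of the second kind of order 0. -/
/-!
Substituting `s = √x · eᵗ` turns the defining integral into
`2 K₀(2√x) = ∫₀^∞ e^{-s - x/s} ds / s`. By Tonelli the `x`-integral can be done first:
`∫₀^∞ xⁿ e^{-x/s} dx = n! s^{n+1}`, which leaves `n! ∫₀^∞ sⁿ e^{-s} ds = (n!)²`.
-/

open MeasureTheory Real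

/-- The modified Bessel function of the second kind of order zero,
via the Sommerfeld integral representation. -/
noncomputable def K0 (y : ℝ) : ℝ := ∫ t in Set.Ioi (0:ℝ), Real.exp (-y * Real.cosh t)

open Set

theorem integral_comp_exp {E : Type*} [NormedAddCommGroup E] [NormedSpace ℝ E] (g : ℝ → E) :
    ∫ t, exp t • g (exp t) = ∫ y in Ioi 0, g y := by
  rw [← range_exp, ← image_univ, integral_image_eq_integral_abs_deriv_smul MeasurableSet.univ
    (fun t _ ↦ (hasDerivAt_exp t).hasDerivWithinAt) exp_injective.injOn, setIntegral_univ]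
  simp only [abs_of_pos (exp_pos _)]

theorem integral_pow_mul_exp_neg_mul_Ioi (n : ℕ) {b : ℝ} (hb : 0 < b) :
    ∫ x in Ioi 0, x ^ n * exp (-(b * x)) = n.factorial / b ^ (n + 1) := by
  have h := integral_rpow_mul_exp_neg_mul_Ioi (a := n + 1) (by positivity) hb
  simp only [add_sub_cancel_right, rpow_natCast, Gamma_nat_eq_factorial] at h
  rw [h, ← Nat.cast_succ, rpow_natCast, one_div, inv_pow, inv_mul_eq_div]

theorem integrableOn_pow_mul_exp_neg_mul_Ioi (n : ℕ) {b : ℝ} (hb : 0 < b) :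
    IntegrableOn (fun x ↦ x ^ n * exp (-(b * x))) (Ioi 0) := by
  simpa [rpow_natCast] using integrableOn_rpow_mul_exp_neg_mul_rpow
    (s := n) (p := 1) (by linarith [n.cast_nonneg (α := ℝ)]) one_pos hb

theorem integral_integral_swap_of_nonneg {α β : Type*} [MeasurableSpace α] [MeasurableSpace β]
    {μ : Measure α} {ν : Measure β} [SFinite μ] [SFinite ν] {f : α → β → ℝ}
    (hf : AEStronglyMeasurable (Function.uncurry f) (μ.prod ν))
    (hf_nonneg : ∀ᵐ y ∂ν, 0 ≤ᵐ[μ] (f · y))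
    (h_int : ∀ᵐ y ∂ν, Integrable (f · y) μ) (h_int' : Integrable (fun y ↦ ∫ x, f x y ∂μ) ν) :
    ∫ x, ∫ y, f x y ∂ν ∂μ = ∫ y, ∫ x, f x y ∂μ ∂ν := by
  refine integral_integral_swap ((integrable_prod_iff' hf).2 ⟨h_int, h_int'.congr ?_⟩)
  filter_upwards [hf_nonneg] with y hy
  exact integral_congr_ae (hy.mono fun x hx ↦ (norm_of_nonneg hx).symm)

theorem two_mul_K0 (y : ℝ) : 2 * K0 y = ∫ t, exp (-y * cosh t) := by
  rw [K0, ← integral_comp_abs (f := fun t ↦ exp (-y * cosh t))]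
  simp only [cosh_abs]

theorem two_mul_K0_two_mul_sqrt {x : ℝ} (hx : 0 < x) :
    2 * K0 (2 * √x) = ∫ s in Ioi 0, exp (-s - x / s) / s := by
  rw [two_mul_K0, ← integral_comp_exp,
    ← integral_add_right_eq_self (fun t ↦ exp t • (exp (-exp t - x / exp t) / exp t)) (log √x)]
  congr 1 with t
  rw [smul_eq_mul, mul_div_cancel₀ _ (exp_pos _).ne', exp_add, exp_log (sqrt_pos.2 hx), cosh_eq]
  congr 1
  field_simp
  rw [sq_sqrt hx.le, exp_neg]
  field_simp
  ring

theorem pow_mul_exp_neg_sub_div_div (n : ℕ) (x s : ℝ) :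
    x ^ n * (exp (-s - x / s) / s) = exp (-s) / s * (x ^ n * exp (-(s⁻¹ * x))) := by
  rw [sub_eq_add_neg, exp_add, inv_mul_eq_div]
  ring

theorem integrableOn_pow_mul_exp_neg_sub_div_div (n : ℕ) {s : ℝ} (hs : 0 < s) :
    IntegrableOn (fun x ↦ x ^ n * (exp (-s - x / s) / s)) (Ioi 0) := by
  simp_rw [pow_mul_exp_neg_sub_div_div]
  exact (integrableOn_pow_mul_exp_neg_mul_Ioi n (inv_pos.2 hs)).const_mul _

theorem integral_pow_mul_exp_neg_sub_div_div (n : ℕ) {s : ℝ} (hs : 0 < s) :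
    ∫ x in Ioi 0, x ^ n * (exp (-s - x / s) / s) = n.factorial * (s ^ n * exp (-(1 * s))) := by
  simp_rw [pow_mul_exp_neg_sub_div_div]
  rw [integral_const_mul, integral_pow_mul_exp_neg_mul_Ioi n (inv_pos.2 hs),
    inv_pow, div_inv_eq_mul, pow_succ, one_mul]
  field_simp

theorem integral_Ioi_integral_Ioi_swap_pow_mul_exp_neg_sub_div_div (n : ℕ) :
    ∫ x in Ioi 0, ∫ s in Ioi 0, x ^ n * (exp (-s - x / s) / s)
      = ∫ s in Ioi 0, ∫ x in Ioi 0, x ^ n * (exp (-s - x / s) / s) := by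
  refine integral_integral_swap_of_nonneg ?_ ?_ ?_ ?_
  · exact (by fun_prop : Measurable fun p : ℝ × ℝ ↦
      p.1 ^ n * (exp (-p.2 - p.1 / p.2) / p.2)).aestronglyMeasurable
  · refine ae_restrict_of_forall_mem measurableSet_Ioi fun s hs ↦ ?_
    exact ae_restrict_of_forall_mem measurableSet_Ioi fun x hx ↦
      mul_nonneg (pow_nonneg (mem_Ioi.1 hx).le n) (div_nonneg (exp_nonneg _) (mem_Ioi.1 hs).le)
  · exact ae_restrict_of_forall_mem measurableSet_Ioi fun s hs ↦
      integrableOn_pow_mul_exp_neg_sub_div_div n hs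
  · refine IntegrableOn.congr_fun ((integrableOn_pow_mul_exp_neg_mul_Ioi n one_pos).const_mul
      (n.factorial : ℝ)) (fun s hs ↦ ?_) measurableSet_Ioi
    rw [integral_pow_mul_exp_neg_sub_div_div n hs]

theorem stmt_2 (n : ℕ) :
    ∫ x in Set.Ioi (0:ℝ), (x : ℝ) ^ n * (2 * K0 (2 * Real.sqrt x))
      = ((n.factorial : ℝ)) ^ 2 := by
  calc ∫ x in Ioi 0, x ^ n * (2 * K0 (2 * √x))
      = ∫ x in Ioi 0, ∫ s in Ioi 0, x ^ n * (exp (-s - x / s) / s) :=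
        setIntegral_congr_fun measurableSet_Ioi fun x hx ↦ by
          rw [two_mul_K0_two_mul_sqrt hx, integral_const_mul]
    _ = ∫ s in Ioi 0, ∫ x in Ioi 0, x ^ n * (exp (-s - x / s) / s) :=
        integral_Ioi_integral_Ioi_swap_pow_mul_exp_neg_sub_div_div n
    _ = ∫ s in Ioi 0, n.factorial * (s ^ n * exp (-(1 * s))) :=
        setIntegral_congr_fun measurableSet_Ioi fun s hs ↦
          integral_pow_mul_exp_neg_sub_div_div n hs
    _ = n.factorial ^ 2 := by
        rw [integral_const_mul, integral_pow_mul_exp_neg_mul_Ioi n one_pos]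
        ring
end

section
/- For every integer r ≥ 2, the Krein integral ∫₀^∞ (-ln W(x²))/(1+x²) dx is finite, where W(x) = (1/(2r·x^{(2r-1)/(2r)})) · e^{-x^{1/(2r)}}. -/
/-!
For `x > 0` one has `-log W(x²) = log (2r) + (2 - 1/r) log x + x^(1/r)`. Each term is integrable
against `dx / (1 + x²)` on `(0, ∞)`: `x^e / (1 + x²)` is integrable there for `-1 < e < 1`,
`|log x|` is dominated by `2 (x^(1/2) + x^(-1/2))`, and `1/r < 1` because `r ≥ 2`.
-/

open MeasureTheory Real Set

lemma abs_log_le_rpow_add_rpow_neg_div {x ε : ℝ} (hx : 0 < x) (hε : 0 < ε) :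
    |log x| ≤ (x ^ ε + x ^ (-ε)) / ε := by
  have hpos : 0 ≤ x ^ ε / ε := by positivity
  have hneg : 0 ≤ x ^ (-ε) / ε := by positivity
  rw [add_div, abs_le]
  constructor
  · have h := log_le_rpow_div (inv_nonneg.mpr hx.le) hε
    rw [log_inv, inv_rpow hx.le, ← rpow_neg hx.le] at h
    linarith
  · linarith [log_le_rpow_div hx.le hε]

lemma integrableOn_Ioi_rpow_div_one_add_sq {e : ℝ} (he₀ : -1 < e) (he₁ : e < 1) :
    IntegrableOn (fun x : ℝ => x ^ e / (1 + x ^ 2)) (Ioi 0) := by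
  have hmeas : AEStronglyMeasurable (fun x : ℝ => x ^ e / (1 + x ^ 2)) :=
    (by fun_prop : Measurable fun x : ℝ => x ^ e / (1 + x ^ 2)).aestronglyMeasurable
  rw [← Ioc_union_Ioi_eq_Ioi zero_le_one]
  refine IntegrableOn.union ?_ ?_
  · have hdom : IntegrableOn (fun x : ℝ => x ^ e) (Ioc 0 1) :=
      (intervalIntegrable_iff_integrableOn_Ioc_of_le zero_le_one).mp
        (intervalIntegral.intervalIntegrable_rpow' he₀)
    refine Integrable.mono' hdom hmeas.restrict ?_
    filter_upwards [ae_restrict_mem measurableSet_Ioc] with x ⟨hx, _⟩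
    rw [norm_div, norm_of_nonneg (rpow_nonneg hx.le e), norm_of_nonneg (by positivity)]
    exact div_le_self (rpow_nonneg hx.le e) (by nlinarith)
  · refine Integrable.mono' (integrableOn_Ioi_rpow_of_lt (by linarith : e - 2 < -1) zero_lt_one)
      hmeas.restrict ?_
    filter_upwards [ae_restrict_mem measurableSet_Ioi] with x (hx : 1 < x)
    rw [norm_div, norm_of_nonneg (by positivity), norm_of_nonneg (by positivity)]
    calc x ^ e / (1 + x ^ 2) ≤ x ^ e / x ^ 2 := by gcongr; linarith
      _ = x ^ (e - 2) := by rw [rpow_sub (by linarith), rpow_two]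

lemma integrableOn_Ioi_log_div_one_add_sq :
    IntegrableOn (fun x : ℝ => log x / (1 + x ^ 2)) (Ioi 0) := by
  have hdom := ((integrableOn_Ioi_rpow_div_one_add_sq (e := 1 / 2) (by norm_num) (by norm_num)).add
    (integrableOn_Ioi_rpow_div_one_add_sq (e := -(1 / 2)) (by norm_num) (by norm_num))).div_const
      (1 / 2)
  refine Integrable.mono' hdom
    (by fun_prop : Measurable fun x : ℝ => log x / (1 + x ^ 2)).aestronglyMeasurable ?_
  filter_upwards [ae_restrict_mem measurableSet_Ioi] with x (hx : 0 < x)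
  rw [norm_div, norm_eq_abs, norm_of_nonneg (by positivity)]
  calc |log x| / (1 + x ^ 2) ≤ (x ^ (1 / 2 : ℝ) + x ^ (-(1 / 2) : ℝ)) / (1 / 2) / (1 + x ^ 2) := by
        gcongr; exact abs_log_le_rpow_add_rpow_neg_div hx (by norm_num)
    _ = _ := by simp only [Pi.add_apply]; ring

lemma neg_log_weight_sq {R x : ℝ} (hR : 0 < R) (hx : 0 < x) :
    -log (1 / (2 * R * (x ^ 2) ^ ((2 * R - 1) / (2 * R))) * exp (-((x ^ 2) ^ (1 / (2 * R))))) =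
      log (2 * R) + (2 * R - 1) / R * log x + x ^ (1 / R) := by
  have hsq : (x ^ 2) ^ (1 / (2 * R)) = x ^ (1 / R) := by
    rw [← rpow_natCast, ← rpow_mul hx.le]
    congr 1
    push_cast
    field_simp
  rw [log_mul (by positivity) (exp_ne_zero _), log_exp, one_div, log_inv,
    log_mul (by positivity) (by positivity), log_rpow (by positivity), hsq, log_pow]
  field_simp
  ring

theorem stmt_8 (r : ℕ) (hr : 2 ≤ r) :
    MeasureTheory.IntegrableOn
      (fun x : ℝ =>
        (-Real.log
            (1 / (2 * (r : ℝ) * (x ^ 2) ^ ((2 * (r : ℝ) - 1) / (2 * (r : ℝ)))) *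
              Real.exp (-((x ^ 2) ^ (1 / (2 * (r : ℝ))))))) / (1 + x ^ 2))
      (Set.Ioi (0:ℝ)) := by
  have hr₁ : (1 : ℝ) < r := by exact_mod_cast hr
  have hr₀ : (0 : ℝ) < r := by linarith
  have hsum := ((integrable_inv_one_add_sq.integrableOn.const_mul (log (2 * r))).add
    (integrableOn_Ioi_log_div_one_add_sq.const_mul ((2 * r - 1) / r))).add
    (integrableOn_Ioi_rpow_div_one_add_sq (e := 1 / r) (by linarith [one_div_pos.mpr hr₀])
      ((div_lt_one hr₀).mpr hr₁))
  refine IntegrableOn.congr_fun hsum (fun x (hx : 0 < x) => ?_) measurableSet_Ioi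
  simp only [Pi.add_apply]
  rw [neg_log_weight_sq hr₀ hx]
  ring
end

section
/- Let r and k be integers with r > |k| ≥ 1. Then for every natural number n, the integral over (0,∞) of x^n · (1/(2r·x^{(2r-1)/(2r)})) · e^{-x^{1/(2r)}} · sin(kπ·(2r-1)/(2r) + x^{1/(2r)}·tan(kπ/(2r))) dx equals 0. -/
/-!
Substituting `x = t ^ (2r)` turns the integral into `∫ t ^ M * exp (-t) * sin (a + t * tan θ)` over
`(0, ∞)` with `M = 2rn`, `θ = kπ/(2r)`, `a = kπ(2r-1)/(2r)`. This is the imaginary part of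
`exp (i a)` times the Laplace transform `M! / s ^ (M + 1)` of `t ^ M` at `s = 1 - i tan θ`, and
`s = exp (-iθ) / cos θ`, so it equals `M! cos θ ^ (M + 1) sin (a + (M + 1) θ)`. For our `a`, `θ`,
`M` the angle `a + (M + 1) θ` is `kπ(n + 1)`.
-/

open MeasureTheory Real Filter Set Topology Nat
open scoped Complex

section LaplacePow

variable {s : ℂ}

lemma norm_ofReal_pow_mul_cexp_neg_mul (m : ℕ) {t : ℝ} (ht : 0 ≤ t) :
    ‖(t : ℂ) ^ m * cexp (-(s * t))‖ = t ^ (m : ℝ) * rexp (-s.re * t) := by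
  simp [Complex.norm_exp, abs_of_nonneg ht]

lemma tendsto_ofReal_pow_mul_cexp_neg_mul_atTop (hs : 0 < s.re) (m : ℕ) :
    Tendsto (fun t : ℝ => (t : ℂ) ^ m * cexp (-(s * t))) atTop (𝓝 0) := by
  rw [tendsto_zero_iff_norm_tendsto_zero]
  refine (tendsto_rpow_mul_exp_neg_mul_atTop_nhds_zero m s.re hs).congr' ?_
  filter_upwards [eventually_ge_atTop 0] with t ht
  rw [norm_ofReal_pow_mul_cexp_neg_mul m ht]

lemma integrableOn_ofReal_pow_mul_cexp_neg_mul_Ioi (hs : 0 < s.re) (m : ℕ) :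
    IntegrableOn (fun t : ℝ => (t : ℂ) ^ m * cexp (-(s * t))) (Ioi 0) := by
  have hmaj := integrableOn_rpow_mul_exp_neg_mul_rpow (s := m) (p := 1)
    (by linarith [m.cast_nonneg (α := ℝ)]) one_pos hs
  refine hmaj.mono' (by fun_prop) ?_
  filter_upwards [ae_restrict_mem measurableSet_Ioi] with t ht
  rw [norm_ofReal_pow_mul_cexp_neg_mul m (le_of_lt ht), rpow_one]

lemma hasDerivAt_ofReal_pow_succ_mul_cexp_neg_mul (m : ℕ) (t : ℝ) :
    HasDerivAt (fun u : ℝ => (u : ℂ) ^ (m + 1) * cexp (-(s * u)))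
      ((m + 1) * ((t : ℂ) ^ m * cexp (-(s * t))) - s * ((t : ℂ) ^ (m + 1) * cexp (-(s * t))))
      t := by
  have h : HasDerivAt (fun z : ℂ => z ^ (m + 1) * cexp (-(s * z)))
      ((m + 1 : ℕ) * (t : ℂ) ^ m * cexp (-(s * t)) + (t : ℂ) ^ (m + 1) * (cexp (-(s * t)) * -s))
      t := by
    simpa using (hasDerivAt_pow (m + 1) (t : ℂ)).fun_mul
      (((hasDerivAt_id (t : ℂ)).const_mul s).neg.cexp)
  convert h.comp_ofReal using 1
  push_cast
  ring

theorem integral_ofReal_pow_mul_cexp_neg_mul_Ioi (hs : 0 < s.re) (m : ℕ) :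
    ∫ t in Ioi (0 : ℝ), (t : ℂ) ^ m * cexp (-(s * t)) = m ! / s ^ (m + 1) := by
  have hs0 : s ≠ 0 := fun h => by simp [h] at hs
  induction m with
  | zero =>
    have h := integral_exp_mul_complex_Ioi (a := -s) (by simpa using hs) 0
    simp only [neg_mul] at h
    simp [h]
  | succ m ih =>
    have hint := integrableOn_ofReal_pow_mul_cexp_neg_mul_Ioi hs
    have hibp := integral_Ioi_of_hasDerivAt_of_tendsto'
      (fun t _ => hasDerivAt_ofReal_pow_succ_mul_cexp_neg_mul m t)
      (((hint m).const_mul _).sub ((hint (m + 1)).const_mul _))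
      (tendsto_ofReal_pow_mul_cexp_neg_mul_atTop hs (m + 1))
    rw [integral_sub ((hint m).const_mul _) ((hint (m + 1)).const_mul _),
      integral_const_mul, integral_const_mul, ih] at hibp
    simp only [Complex.ofReal_zero, ne_eq, Nat.add_eq_zero_iff, one_ne_zero, and_false,
      not_false_eq_true, zero_pow, zero_mul, sub_zero] at hibp
    rw [eq_div_iff (pow_ne_zero _ hs0)]
    field_simp at hibp
    push_cast [Nat.factorial_succ]
    linear_combination -hibp

end LaplacePow

lemma ofReal_cos_mul_one_sub_I_mul_tan {θ : ℝ} (hθ : cos θ ≠ 0) :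
    (cos θ : ℂ) * (1 - Complex.I * tan θ) = cexp (-θ * Complex.I) := by
  rw [Complex.exp_mul_I, Complex.cos_neg, Complex.sin_neg, ← Complex.ofReal_cos,
    ← Complex.ofReal_sin, Real.tan_eq_sin_div_cos, Complex.ofReal_div]
  have : (cos θ : ℂ) ≠ 0 := by exact_mod_cast hθ
  field_simp
  ring

theorem integral_pow_mul_exp_neg_sin_add_mul_tan_Ioi (M : ℕ) (a : ℝ) {θ : ℝ} (hθ : cos θ ≠ 0) :
    ∫ x in Ioi (0 : ℝ), x ^ M * rexp (-x) * Real.sin (a + x * tan θ)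
      = M ! * cos θ ^ (M + 1) * Real.sin (a + (M + 1) * θ) := by
  set s : ℂ := 1 - Complex.I * tan θ with hs_def
  have hs : 0 < s.re := by simp [s]
  have hIm : ∀ x : ℝ, x ^ M * rexp (-x) * Real.sin (a + x * tan θ)
      = ((x : ℂ) ^ M * cexp (-(s * x)) * cexp (a * Complex.I)).im := by
    intro x
    have : (x : ℂ) ^ M * cexp (-(s * x)) * cexp (a * Complex.I)
        = ((x ^ M * rexp (-x) : ℝ) : ℂ) * cexp ((a + x * tan θ : ℝ) * Complex.I) := by
      rw [mul_assoc, ← Complex.exp_add, Complex.ofReal_mul, Complex.ofReal_exp, mul_assoc,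
        ← Complex.exp_add]
      simp only [hs_def, Complex.ofReal_add, Complex.ofReal_mul, Complex.ofReal_neg,
        Complex.ofReal_pow]
      ring_nf
    rw [this, Complex.im_ofReal_mul, Complex.exp_ofReal_mul_I_im]
  have hval : (M ! / s ^ (M + 1) : ℂ) * cexp (a * Complex.I)
      = ((M ! * cos θ ^ (M + 1) : ℝ) : ℂ) * cexp ((a + (M + 1) * θ : ℝ) * Complex.I) := by
    have hs0 : s ^ (M + 1) ≠ 0 := pow_ne_zero _ (fun h => by simp [h] at hs)
    have hcs : (cos θ : ℂ) ^ (M + 1) * s ^ (M + 1) = cexp (-((M + 1) * θ : ℝ) * Complex.I) := by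
      rw [← mul_pow, ofReal_cos_mul_one_sub_I_mul_tan hθ, ← Complex.exp_nat_mul]
      push_cast
      ring_nf
    have hexp : cexp (-((M + 1) * θ : ℝ) * Complex.I) * cexp ((a + (M + 1) * θ : ℝ) * Complex.I)
        = cexp (a * Complex.I) := by
      rw [← Complex.exp_add]
      push_cast
      ring_nf
    rw [div_mul_eq_mul_div, div_eq_iff hs0, Complex.ofReal_mul, Complex.ofReal_pow,
      Complex.ofReal_natCast]
    linear_combination
      (-(M ! : ℂ) * cexp ((a + (M + 1) * θ : ℝ) * Complex.I)) * hcs - (M ! : ℂ) * hexp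
  have hint :=
    (integrableOn_ofReal_pow_mul_cexp_neg_mul_Ioi hs M).mul_const (cexp (a * Complex.I))
  simp_rw [hIm]
  refine (integral_im hint).trans ?_
  rw [integral_mul_const, integral_ofReal_pow_mul_cexp_neg_mul_Ioi hs, hval,
    RCLike.im_to_complex, Complex.im_ofReal_mul, Complex.exp_ofReal_mul_I_im]

theorem integral_pow_mul_comp_rpow_one_div_Ioi {p : ℝ} (hp : 0 < p) (n : ℕ) (h : ℝ → ℝ) :
    ∫ x in Ioi (0 : ℝ), x ^ n * (1 / (p * x ^ ((p - 1) / p))) * h (x ^ (1 / p))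
      = ∫ t in Ioi (0 : ℝ), t ^ (p * n) * h t := by
  rw [← integral_comp_rpow_Ioi _ hp.ne']
  refine setIntegral_congr_fun measurableSet_Ioi fun t (ht_pos : 0 < t) => ?_
  have ht : 0 ≤ t := ht_pos.le
  have hroot : (t ^ p) ^ (1 / p) = t := by
    rw [← rpow_mul ht, mul_one_div_cancel hp.ne', rpow_one]
  have hjac : (t ^ p) ^ ((p - 1) / p) = t ^ (p - 1) := by
    rw [← rpow_mul ht, mul_div_cancel₀ _ hp.ne']
  have hpow : (t ^ p) ^ n = t ^ (p * n) := by rw [← rpow_natCast, ← rpow_mul ht]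
  have : t ^ (p - 1) ≠ 0 := (rpow_pos_of_pos ht_pos _).ne'
  rw [smul_eq_mul, hroot, hjac, hpow, abs_of_pos hp]
  field_simp

lemma cos_mul_pi_div_two_mul_pos {k r : ℝ} (hkr : |k| < r) : 0 < cos (k * π / (2 * r)) := by
  have h2r : 0 < 2 * r := by linarith [abs_nonneg k]
  refine cos_pos_of_mem_Ioo ⟨?_, ?_⟩
  · rw [lt_div_iff₀ h2r]; nlinarith [pi_pos, abs_lt.mp hkr]
  · rw [div_lt_iff₀ h2r]; nlinarith [pi_pos, abs_lt.mp hkr]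

theorem stmt_11_general (r : ℕ) (k : ℤ) (hrk : |k| < (r : ℤ)) (n : ℕ) :
    ∫ x in Set.Ioi (0:ℝ),
      (x : ℝ) ^ n *
        (1 / (2 * (r : ℝ) * x ^ ((2 * (r : ℝ) - 1) / (2 * (r : ℝ)))) *
          Real.exp (-(x ^ (1 / (2 * (r : ℝ))))) *
          Real.sin ((k : ℝ) * Real.pi * (2 * (r : ℝ) - 1) / (2 * (r : ℝ)) +
            x ^ (1 / (2 * (r : ℝ))) * Real.tan ((k : ℝ) * Real.pi / (2 * (r : ℝ)))))
      = 0 := by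
  have hr : (0 : ℝ) < r := by exact_mod_cast (abs_nonneg k).trans_lt hrk
  have h2r : (0 : ℝ) < 2 * r := by positivity
  have hcos : cos ((k : ℝ) * π / (2 * r)) ≠ 0 :=
    (cos_mul_pi_div_two_mul_pos (by exact_mod_cast hrk)).ne'
  set a := (k : ℝ) * π * (2 * r - 1) / (2 * r) with ha
  set θ := (k : ℝ) * π / (2 * r) with hθ
  have hpow : ∀ t : ℝ, t ^ (2 * (r : ℝ) * n) = t ^ (2 * r * n) := fun t => by
    rw [← rpow_natCast]; push_cast; rfl
  have hsin : Real.sin (a + ((2 * r * n : ℕ) + 1) * θ) = 0 := by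
    rw [show a + ((2 * r * n : ℕ) + 1) * θ = (k * (n + 1) : ℤ) * π by
      rw [ha, hθ]; push_cast; field_simp; ring]
    exact sin_int_mul_pi _
  refine (setIntegral_congr_fun measurableSet_Ioi fun x _ => ?_).trans
    ((integral_pow_mul_comp_rpow_one_div_Ioi h2r n
      (fun t => rexp (-t) * Real.sin (a + t * tan θ))).trans ?_)
  · ring
  simp only [hpow, ← mul_assoc (_ ^ _)]
  rw [integral_pow_mul_exp_neg_sin_add_mul_tan_Ioi _ _ hcos, hsin, mul_zero]

theorem stmt_11 (r : ℕ) (k : ℤ) (hk : 1 ≤ |k|) (hrk : |k| < (r : ℤ)) (n : ℕ) :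
    ∫ x in Set.Ioi (0:ℝ),
      (x : ℝ) ^ n *
        (1 / (2 * (r : ℝ) * x ^ ((2 * (r : ℝ) - 1) / (2 * (r : ℝ)))) *
          Real.exp (-(x ^ (1 / (2 * (r : ℝ))))) *
          Real.sin ((k : ℝ) * Real.pi * (2 * (r : ℝ) - 1) / (2 * (r : ℝ)) +
            x ^ (1 / (2 * (r : ℝ))) * Real.tan ((k : ℝ) * Real.pi / (2 * (r : ℝ)))))
      = 0 :=
  stmt_11_general r k hrk n
end
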